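/- Let P be a finite connected poset and K a field. The assignment sending a connected compatible partition π = (P_1,…,P_k) of P to the set F_π = {v ∈ D(M_P) : for every i, Σ_{p∈P_i} v_p = 0 and Σ_{p∈L} v_p ≤ 0 for every lower set L of the induced poset on P_i} is a bijection from the set of connected compatible partitions of P onto the set of faces of the cone D(M_P). -/

import Mathlib

attribute [local instance] Classical.propDecidable

/-- A finite quiver: finite sets of vertices and arrows with source and target maps. -/
structure FinQuiver where
  V : Type
  A : Type
  [fintypeV : Fintype V]
  [decEqV : DecidableEq V]
  [fintypeA : Fintype A]
  [decEqA : DecidableEq A]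
  s : A → V
  t : A → V

attribute [instance] FinQuiver.fintypeV FinQuiver.decEqV FinQuiver.fintypeA FinQuiver.decEqA

/-- A finite-dimensional representation of a finite quiver over a field `K`. -/
structure QRep (K : Type) [Field K] (Q : FinQuiver) where
  M : Q.V → Type
  [acg : ∀ i, AddCommGroup (M i)]
  [mod : ∀ i, Module K (M i)]
  [fd : ∀ i, FiniteDimensional K (M i)]
  φ : ∀ a : Q.A, M (Q.s a) →ₗ[K] M (Q.t a)

attribute [instance] QRep.acg QRep.mod QRep.fd

/-- A subrepresentation: a subspace at every vertex, compatible with the arrow maps. -/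
structure QSubRep {K : Type} [Field K] {Q : FinQuiver} (R : QRep K Q) where
  L : ∀ i, Submodule K (R.M i)
  compat : ∀ a : Q.A, ∀ x ∈ L (Q.s a), R.φ a x ∈ L (Q.t a)

def QSubRep.le {K : Type} [Field K] {Q : FinQuiver} {R : QRep K Q} (N N' : QSubRep R) : Prop :=
  ∀ i, N.L i ≤ N'.L i

/-- The dimension vector of a representation. -/
noncomputable def QRep.dimVec {K : Type} [Field K] {Q : FinQuiver} (R : QRep K Q) (i : Q.V) : ℕ :=
  Module.finrank K (R.M i)

/-- Standard inner product of a real vector with a dimension vector. -/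
def stabInner {Q : FinQuiver} (v : Q.V → ℝ) (d : Q.V → ℕ) : ℝ :=
  ∑ i, v i * (d i : ℝ)

/-- `v`-semistability of a representation. -/
def IsSemistable {K : Type} [Field K] {Q : FinQuiver} (R : QRep K Q) (v : Q.V → ℝ) : Prop :=
  stabInner v R.dimVec = 0 ∧
    ∀ N : QSubRep R, stabInner v (fun i => Module.finrank K (N.L i)) ≤ 0

/-- The stability space of a representation. -/
def stabSpace {K : Type} [Field K] {Q : FinQuiver} (R : QRep K Q) : Set (Q.V → ℝ) :=
  {v | IsSemistable R v}

/-- `v`-stability of a representation. -/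
def IsStable {K : Type} [Field K] {Q : FinQuiver} (R : QRep K Q) (v : Q.V → ℝ) : Prop :=
  stabInner v R.dimVec = 0 ∧
    ∀ N : QSubRep R, (∃ i, N.L i ≠ ⊥) → (∃ i, N.L i ≠ ⊤) →
      stabInner v (fun i => Module.finrank K (N.L i)) < 0

/-- The thin sincere representation with identity maps: `K` at every vertex. -/
noncomputable def thinRep (K : Type) [Field K] (Q : FinQuiver) : QRep K Q where
  M _ := K
  φ _ := LinearMap.id

/-- The set of all finite non-negative real linear combinations of elements of `X`. -/
def coneSpan {E : Type} [AddCommMonoid E] [Module ℝ E] (X : Set E) : Set E :=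
  {x | ∃ (n : ℕ) (c : Fin n → ℝ) (f : Fin n → E),
    (∀ j, 0 ≤ c j) ∧ (∀ j, f j ∈ X) ∧ x = ∑ j, c j • f j}

/-- The standard basis vector of `ℝ^{Q₀}` at a vertex. -/
noncomputable def eVec (Q : FinQuiver) (i : Q.V) : Q.V → ℝ := Pi.single i 1

/-- A subrepresentation viewed as a representation in its own right. -/
noncomputable def QSubRep.toRep {K : Type} [Field K] {Q : FinQuiver} {R : QRep K Q}
    (N : QSubRep R) : QRep K Q where
  M i := ↥(N.L i)
  φ a := (R.φ a).restrict (fun x hx => N.compat a x hx)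

/-- The quotient of a representation by a subrepresentation. -/
noncomputable def QRep.quotBy {K : Type} [Field K] {Q : FinQuiver} (R : QRep K Q)
    (N : QSubRep R) : QRep K Q where
  M i := R.M i ⧸ N.L i
  φ a := Submodule.mapQ _ _ (R.φ a) (fun x hx => N.compat a x hx)

/-- The quotient `N'/N` of nested subrepresentations, as a representation. -/
noncomputable def quotRep {K : Type} [Field K] {Q : FinQuiver} (R : QRep K Q)
    (N N' : QSubRep R) (h : QSubRep.le N N') : QRep K Q where
  M i := ↥(N'.L i) ⧸ Submodule.comap (N'.L i).subtype (N.L i)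
  φ a := Submodule.mapQ _ _ ((R.φ a).restrict (fun x hx => N'.compat a x hx))
    (by
      intro x hx
      simp only [Submodule.mem_comap, Submodule.subtype_apply,
        LinearMap.restrict_apply] at hx ⊢
      exact N.compat a _ hx)

/-- A representation is nonzero if some vertex space is nonzero. -/
def QRep.Nonzero {K : Type} [Field K] {Q : FinQuiver} (R : QRep K Q) : Prop :=
  ∃ i, Module.finrank K (R.M i) ≠ 0

/-- Indecomposability: nonzero and admitting no internal direct sum decomposition into two
nonzero subrepresentations. -/
def Indecomposable {K : Type} [Field K] {Q : FinQuiver} (R : QRep K Q) : Prop :=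
  R.Nonzero ∧
    ¬∃ U W : QSubRep R, (∃ i, U.L i ≠ ⊥) ∧ (∃ i, W.L i ≠ ⊥) ∧
      (∀ i, U.L i ⊓ W.L i = ⊥) ∧ (∀ i, U.L i ⊔ W.L i = ⊤)

/-- Isomorphism of representations. -/
def RepIso {K : Type} [Field K] {Q : FinQuiver} (R R' : QRep K Q) : Prop :=
  ∃ f : ∀ i, R.M i ≃ₗ[K] R'.M i,
    ∀ (a : Q.A) (x : R.M (Q.s a)), f (Q.t a) (R.φ a x) = R'.φ a (f (Q.s a) x)

/-- The support of a representation. -/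
def QRep.supp {K : Type} [Field K] {Q : FinQuiver} (R : QRep K Q) : Set Q.V :=
  {i | Module.finrank K (R.M i) ≠ 0}

/-- The stability space restricted to the coordinate subspace of the support. -/
def Dsupp {K : Type} [Field K] {Q : FinQuiver} (R : QRep K Q) : Set (Q.V → ℝ) :=
  stabSpace R ∩ {v | ∀ i, i ∉ R.supp → v i = 0}

/-- Standard inner product on `ℝ^V`. -/
def rInner {V : Type} [Fintype V] (a v : V → ℝ) : ℝ := ∑ i, a i * v i

/-- A face of a polyhedral cone. -/
def IsFace {V : Type} [Fintype V] (C F : Set (V → ℝ)) : Prop :=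
  ∃ a : V → ℝ, (∀ v ∈ C, rInner a v ≤ 0) ∧ F = C ∩ {v | rInner a v = 0}

/-- The dimension of the linear span of a subset of `ℝ^V`. -/
noncomputable def coneDim {V : Type} [Fintype V] (F : Set (V → ℝ)) : ℕ :=
  Module.finrank ℝ ↥(Submodule.span ℝ F)

/-- A facet: a face of codimension one. -/
def IsFacet {V : Type} [Fintype V] (C F : Set (V → ℝ)) : Prop :=
  IsFace C F ∧ coneDim F + 1 = coneDim C

/-- Composability of a list of arrows (a directed path). -/
def PathComposable {Q : FinQuiver} : List Q.A → Prop
  | [] => True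
  | [_] => True
  | a :: b :: l => Q.t a = Q.s b ∧ PathComposable (b :: l)

/-- The Hasse quiver of a finite poset: one arrow `y → x` for each covering relation `x ⋖ y`. -/
noncomputable def hasseQuiver (P : Type) [PartialOrder P] [Fintype P] [DecidableEq P] :
    FinQuiver where
  V := P
  A := {q : P × P // q.1 ⋖ q.2}
  fintypeA := Fintype.ofFinite _
  s q := q.1.2
  t q := q.1.1

/-- The representation `M_S` of the Hasse quiver of `P` attached to a subset `S ⊆ P`:
a copy of `K` at each element of `S`, zero elsewhere, identity maps whenever possible. -/
noncomputable def MS (K : Type) [Field K] (P : Type) [PartialOrder P] [Fintype P]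
    [DecidableEq P] (S : Finset P) : QRep K (hasseQuiver P) where
  M p := ↥(if p ∈ S then (⊤ : Submodule K K) else ⊥)
  φ a :=
    if h : (hasseQuiver P).s a ∈ S ∧ (hasseQuiver P).t a ∈ S then
      { toFun := fun x => ⟨(x : K), by simp [h.2]⟩
        map_add' := fun x y => rfl
        map_smul' := fun c x => rfl }
    else 0

/-- The covering relation of the subposet induced on a subset `S`. -/
def covIn {P : Type} [PartialOrder P] (S : Finset P) (x y : P) : Prop :=
  x ∈ S ∧ y ∈ S ∧ x < y ∧ ∀ z ∈ S, ¬(x < z ∧ z < y)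

/-- Connectivity of the Hasse diagram of the subposet induced on `S`. -/
def connectedIn {P : Type} [PartialOrder P] (S : Finset P) : Prop :=
  ∀ x ∈ S, ∀ y ∈ S, Relation.ReflTransGen (fun u v => covIn S u v ∨ covIn S v u) x y

/-- Connectivity of a poset: its Hasse diagram is connected. -/
def posetConnected (P : Type) [PartialOrder P] : Prop :=
  Nonempty P ∧ ∀ x y : P, Relation.ReflTransGen (fun u v => u ⋖ v ∨ v ⋖ u) x y

/-- A partition of `P` into `k` blocks, given as a function `Fin k → Finset P`. -/
def IsFinPartition {P : Type} (k : ℕ) (B : Fin k → Finset P) : Prop :=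
  (∀ i, (B i).Nonempty) ∧ (∀ i j, i ≠ j → Disjoint (B i) (B j)) ∧ ∀ p : P, ∃ i, p ∈ B i

/-- The quotient relation on the blocks of a partition. -/
def blockRel {P : Type} [PartialOrder P] {k : ℕ} (B : Fin k → Finset P) (i j : Fin k) : Prop :=
  ∃ p ∈ B i, ∃ q ∈ B j, p ≤ q

/-- Compatibility of a partition: the transitive closure of the quotient relation is
antisymmetric (hence a partial order on the blocks). -/
def compatiblePart {P : Type} [PartialOrder P] {k : ℕ} (B : Fin k → Finset P) : Prop :=
  ∀ i j, Relation.TransGen (blockRel B) i j → Relation.TransGen (blockRel B) j i → i = j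

/-- The quotient relation on the blocks of a partition given as a finite set of blocks. -/
def blockRelF {P : Type} [PartialOrder P] (π : Finset (Finset P)) (S T : Finset P) : Prop :=
  S ∈ π ∧ T ∈ π ∧ ∃ p ∈ S, ∃ q ∈ T, p ≤ q

/-- The set of connected compatible partitions of `P`, viewed as finite sets of blocks. -/
def CCpartitions (P : Type) [PartialOrder P] [Fintype P] [DecidableEq P] :
    Set (Finset (Finset P)) :=
  {π | (∀ S ∈ π, S.Nonempty) ∧ (∀ S ∈ π, ∀ T ∈ π, S ≠ T → Disjoint S T) ∧
       (∀ p : P, ∃ S ∈ π, p ∈ S) ∧ (∀ S ∈ π, connectedIn S) ∧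
       ∀ S T : Finset P, Relation.TransGen (blockRelF π) S T →
         Relation.TransGen (blockRelF π) T S → S = T}

/-- `T` is a lower set of the subposet induced on the block `S`. -/
def lowerInBlock {P : Type} [PartialOrder P] (S T : Finset P) : Prop :=
  T ⊆ S ∧ ∀ x ∈ S, ∀ y ∈ T, x ≤ y → x ∈ T

/-- The set `F_π` attached to a partition `π` of `P`. -/
def Fpi (K : Type) [Field K] (P : Type) [PartialOrder P] [Fintype P] [DecidableEq P]
    (π : Finset (Finset P)) : Set (P → ℝ) :=
  {v | v ∈ stabSpace (thinRep K (hasseQuiver P)) ∧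
    ∀ S ∈ π, (∑ p ∈ S, v p = 0) ∧ ∀ T : Finset P, lowerInBlock S T → ∑ p ∈ T, v p ≤ 0}


/-!
The faces of `D(M_P)` are controlled by their *tight* lower sets, those on which every point of
the face sums to zero. For a face `F`, tight sets are closed under `∩` and `∪` (their sums are
nonpositive and add up to the sums over the two given sets), so the points lying in the same
tight sets form classes, each the difference of two tight sets. These classes are connected
(a disconnected class splits into two pieces that would be tight) and compatible (a block below
another lies in every tight set containing it). A face of a polyhedral cone is cut out by the
inequalities tight on it, hence `F = F_π` for the partition `π` into classes.

Conversely, for a connected compatible partition `π` the down-closures of the blocks in the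
block order give a supporting functional with face `F_π`, and the vectors `e_w - e_u` for
`u ≤ w` in one block show that the classes of `F_π` are exactly the blocks of `π`.
-/

open Finset Filter Topology Relation

section PolyhedralCone

variable {E ι : Type*} [AddCommGroup E] [Module ℝ E]

def polyCone (S : Submodule ℝ E) (g : ι → E →ₗ[ℝ] ℝ) : Set E :=
  {v | v ∈ S ∧ ∀ i, g i v ≤ 0}

theorem sum_mem_polyCone {S : Submodule ℝ E} {g : ι → E →ₗ[ℝ] ℝ} {κ : Type*} (s : Finset κ)
    {v : κ → E} (hv : ∀ k ∈ s, v k ∈ polyCone S g) : ∑ k ∈ s, v k ∈ polyCone S g := by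
  refine sum_induction v (· ∈ polyCone S g) (fun u w hu hw => ⟨S.add_mem hu.1 hw.1, fun i => ?_⟩)
    ⟨S.zero_mem, fun i => by simp⟩ hv
  simpa using add_nonpos (hu.2 i) (hw.2 i)

theorem exists_pos_forall_sub_mul_neg {κ : Type*} [Finite κ] (b c : κ → ℝ) :
    ∃ ε > 0, ∀ k, b k < 0 → b k - ε * c k < 0 := by
  have : ∀ᶠ ε in 𝓝[>] (0 : ℝ), ∀ k, b k < 0 → b k - ε * c k < 0 := by
    refine eventually_all.2 fun k => ?_
    by_cases hk : b k < 0
    · have hlim : Tendsto (fun ε => b k - ε * c k) (𝓝[>] 0) (𝓝 (b k)) := by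
        have : Tendsto (fun ε : ℝ => b k - ε * c k) (𝓝 0) (𝓝 (b k - 0 * c k)) :=
          (continuous_const.sub (continuous_id.mul continuous_const)).tendsto 0
        simpa using this.mono_left nhdsWithin_le_nhds
      exact (hlim.eventually (gt_mem_nhds hk)).mono fun _ h _ => h
    · exact Eventually.of_forall fun _ h => absurd h hk
  obtain ⟨ε, hε, hεpos⟩ := (this.and self_mem_nhdsWithin).exists
  exact ⟨ε, hεpos, hε⟩

theorem apply_eq_zero_of_forall_tight [Fintype ι] {S : Submodule ℝ E} {g : ι → E →ₗ[ℝ] ℝ}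
    {a : E →ₗ[ℝ] ℝ} (ha : ∀ v ∈ polyCone S g, a v ≤ 0) {w : E} (hw : w ∈ polyCone S g)
    (htight : ∀ i, (∀ v ∈ polyCone S g, a v = 0 → g i v = 0) → g i w = 0) : a w = 0 := by
  have hwitness : ∀ i, ∃ v ∈ polyCone (S ⊓ LinearMap.ker a) g,
      (∀ u ∈ polyCone S g, a u = 0 → g i u = 0) ∨ g i v < 0 := by
    intro i
    by_cases h : ∀ u ∈ polyCone S g, a u = 0 → g i u = 0
    · exact ⟨0, ⟨zero_mem _, fun j => by simp⟩, Or.inl h⟩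
    · push Not at h
      obtain ⟨u, hu, hua, hne⟩ := h
      exact ⟨u, ⟨⟨hu.1, hua⟩, hu.2⟩, Or.inr ((hu.2 i).lt_of_ne hne)⟩
  choose v hv hvi using hwitness
  set v₀ := ∑ i, v i
  have hv₀ : v₀ ∈ polyCone (S ⊓ LinearMap.ker a) g := sum_mem_polyCone univ fun i _ => hv i
  have hav₀ : a v₀ = 0 := hv₀.1.2
  -- `v₀` lies on the face and satisfies strictly every inequality that is not tight on it
  have hv₀i : ∀ i, (∀ u ∈ polyCone S g, a u = 0 → g i u = 0) ∨ g i v₀ < 0 := by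
    intro i
    refine (hvi i).imp id fun hlt => ?_
    calc g i v₀ = g i (v i) + ∑ j ∈ univ.erase i, g i (v j) := by
          rw [map_sum, Finset.add_sum_erase _ (fun j => g i (v j)) (mem_univ i)]
      _ < 0 := add_neg_of_neg_of_nonpos hlt (sum_nonpos fun j _ => (hv j).2 i)
  -- so `v₀ - ε • w` stays in the cone for small `ε > 0`, which forces `a w ≥ 0`
  obtain ⟨ε, hεpos, hε⟩ := exists_pos_forall_sub_mul_neg (fun i => g i v₀) (fun i => g i w)
  have hmem : v₀ - ε • w ∈ polyCone S g := by
    refine ⟨S.sub_mem hv₀.1.1 (S.smul_mem ε hw.1), fun i => ?_⟩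
    rw [map_sub, map_smul, smul_eq_mul]
    rcases hv₀i i with hi | hi
    · rw [hi v₀ ⟨hv₀.1.1, hv₀.2⟩ hav₀, htight i hi]
      simp
    · exact (hε i hi).le
  have h₁ := ha _ hmem
  rw [map_sub, map_smul, smul_eq_mul, hav₀] at h₁
  nlinarith [ha w hw]

end PolyhedralCone

theorem IsFace.subset {V : Type} [Fintype V] {C F : Set (V → ℝ)} (h : IsFace C F) : F ⊆ C := by
  obtain ⟨a, -, rfl⟩ := h
  exact Set.inter_subset_left

theorem reflTransGen_covIn_of_le {P : Type} [PartialOrder P] {S : Finset P} {x y : P}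
    (hx : x ∈ S) (hy : y ∈ S) (hxy : x ≤ y) : ReflTransGen (covIn S) x y := by
  let := Fintype.toLocallyFiniteOrder (α := S)
  refine (le_iff_reflTransGen_covBy.1 (show (⟨x, hx⟩ : S) ≤ ⟨y, hy⟩ from hxy)).lift Subtype.val
    fun a b hab => ⟨a.2, b.2, hab.1, fun z hz h => hab.2 (c := ⟨z, hz⟩) h.1 h.2⟩

theorem eq_of_reflTransGen_of_reflTransGen {α : Type*} {r : α → α → Prop}
    (hanti : ∀ a b, TransGen r a b → TransGen r b a → a = b) {a b : α}
    (hab : ReflTransGen r a b) (hba : ReflTransGen r b a) : a = b := by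
  rcases reflTransGen_iff_eq_or_transGen.1 hab with h | hab
  · exact h.symm
  rcases reflTransGen_iff_eq_or_transGen.1 hba with h | hba
  · exact h
  exact hanti a b hab hba

theorem isLowerSet_union_of_forall_mem {α : Type*} [Preorder α] [DecidableEq α] {B Z : Finset α}
    (hB : IsLowerSet (B : Set α)) (hZ : ∀ u w, u ≤ w → w ∈ Z → u ∉ B → u ∈ Z) :
    IsLowerSet ((B ∪ Z : Finset α) : Set α) := by
  intro w u huw hw
  simp only [coe_union, Set.mem_union, mem_coe] at hw ⊢
  by_cases hu : u ∈ B
  · exact Or.inl hu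
  · exact Or.inr (hw.elim (fun hwB => absurd (hB huw hwB) hu) fun hwZ => hZ u w huw hwZ hu)

theorem sum_eq_zero_of_forall_subset {α M : Type*} [DecidableEq α] [AddCommMonoid M]
    {π : Finset (Finset α)} (hdisj : ∀ S ∈ π, ∀ T ∈ π, S ≠ T → Disjoint S T)
    (hcover : ∀ p, ∃ T ∈ π, p ∈ T) {L : Finset α} (hL : ∀ T ∈ π, ∀ x ∈ T, x ∈ L → T ⊆ L)
    {v : α → M} (hv : ∀ T ∈ π, ∑ p ∈ T, v p = 0) : ∑ p ∈ L, v p = 0 := by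
  have hLπ : L = (π.filter (· ⊆ L)).biUnion id := by
    ext x
    simp only [mem_biUnion, mem_filter, id]
    refine ⟨fun hx => ?_, fun ⟨T, ⟨_, hTL⟩, hxT⟩ => hTL hxT⟩
    obtain ⟨T, hT, hxT⟩ := hcover x
    exact ⟨T, ⟨hT, hL T hT x hxT hx⟩, hxT⟩
  rw [hLπ, sum_biUnion (t := id) fun S hS T hT hST =>
    hdisj S (mem_filter.1 hS).1 T (mem_filter.1 hT).1 hST]
  exact sum_eq_zero fun T hT => hv T (mem_filter.1 hT).1

theorem sum_single_sub_single {α R : Type*} [DecidableEq α] [AddCommGroup R] (L : Finset α)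
    (u w : α) (r : R) :
    ∑ p ∈ L, (Pi.single w r - Pi.single u r : α → R) p =
      (if w ∈ L then r else 0) - (if u ∈ L then r else 0) := by
  simp [sum_sub_distrib, sum_pi_single']

theorem Submodule.finrank_self_eq_ite (K : Type) [Field K] (S : Submodule K K) :
    Module.finrank K S = if S = ⊤ then 1 else 0 := by
  rcases eq_bot_or_eq_top S with rfl | rfl
  · rw [if_neg bot_ne_top, finrank_bot]
  · rw [if_pos rfl, finrank_top, Module.finrank_self]

theorem Submodule.finrank_ite_top_bot (K : Type) [Field K] (c : Prop) [Decidable c] :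
    Module.finrank K ↥(if c then (⊤ : Submodule K K) else ⊥) = if c then 1 else 0 := by
  by_cases hc : c
  · rw [if_pos hc, if_pos hc, finrank_top, Module.finrank_self]
  · rw [if_neg hc, if_neg hc, finrank_bot]

section ThinRep

variable (K : Type) [Field K] (Q : FinQuiver)

noncomputable def QSubRep.ofArrowClosed (L : Finset Q.V) (hL : ∀ a, Q.s a ∈ L → Q.t a ∈ L) :
    QSubRep (thinRep K Q) where
  L i := if i ∈ L then ⊤ else ⊥
  compat a x hx := by
    by_cases hs : Q.s a ∈ L
    · rw [if_pos (hL a hs)]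
      exact Submodule.mem_top
    · rw [if_neg hs, Submodule.mem_bot] at hx
      rw [hx, map_zero]
      exact zero_mem _

variable {K Q}

theorem stabInner_ite (v : Q.V → ℝ) (L : Finset Q.V) :
    stabInner v (fun i => if i ∈ L then 1 else 0) = ∑ i ∈ L, v i := by
  simp [stabInner, Finset.sum_ite_mem]

theorem stabInner_subRep_thinRep (v : Q.V → ℝ) (N : QSubRep (thinRep K Q)) :
    stabInner v (fun i => Module.finrank K (N.L i)) = ∑ i ∈ {i | N.L i = ⊤}, v i := by
  rw [← stabInner_ite]
  congr 1
  funext i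
  simp only [Finset.mem_filter, Finset.mem_univ, true_and]
  exact Submodule.finrank_self_eq_ite K (N.L i)

variable (K Q) in
theorem stabSpace_thinRep : stabSpace (thinRep K Q) =
    {v | ∑ i, v i = 0 ∧ ∀ L : Finset Q.V, (∀ a, Q.s a ∈ L → Q.t a ∈ L) → ∑ i ∈ L, v i ≤ 0} := by
  ext v
  have hdim : (thinRep K Q).dimVec = fun _ => 1 := funext fun _ => Module.finrank_self K
  have htot : stabInner v (thinRep K Q).dimVec = ∑ i, v i := by
    simpa [hdim] using stabInner_ite v univ
  refine and_congr (by rw [htot]) ⟨fun h L hL => ?_, fun h N => ?_⟩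
  · have hrank : ∀ i, Module.finrank K ((QSubRep.ofArrowClosed K Q L hL).L i) =
        if i ∈ L then 1 else 0 := by
      intro i
      exact Submodule.finrank_ite_top_bot K (i ∈ L)
    simpa [hrank, stabInner_ite] using h (QSubRep.ofArrowClosed K Q L hL)
  · rw [stabInner_subRep_thinRep]
    refine h _ fun a ha => ?_
    simp only [Finset.mem_filter, Finset.mem_univ, true_and] at ha ⊢
    exact top_le_iff.1 fun z _ => N.compat a z (by rw [ha]; exact Submodule.mem_top)

end ThinRep

section LowerCone

variable {P : Type} [PartialOrder P] [Fintype P]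

variable (P) in
def lowerCone : Set (P → ℝ) :=
  {v | ∑ p, v p = 0 ∧ ∀ L : Finset P, IsLowerSet (L : Set P) → ∑ p ∈ L, v p ≤ 0}

theorem forall_arrow_hasseQuiver_iff_isLowerSet [DecidableEq P] (L : Finset P) :
    (∀ a, (hasseQuiver P).s a ∈ L → (hasseQuiver P).t a ∈ L) ↔ IsLowerSet (L : Set P) := by
  let := Fintype.toLocallyFiniteOrder (α := P)
  refine ⟨fun h => Set.antitone_mem.1 ((antitone_iff_forall_covBy _).2 fun x y hxy hy => ?_),
    fun h a ha => h (a.2.le : a.1.1 ≤ a.1.2) ha⟩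
  exact h ⟨(x, y), hxy⟩ hy

variable (K : Type) [Field K] (P) in
theorem stabSpace_thinRep_hasseQuiver [DecidableEq P] :
    stabSpace (thinRep K (hasseQuiver P)) = lowerCone P := by
  rw [stabSpace_thinRep]
  ext v
  exact and_congr Iff.rfl
    (forall_congr' fun L => imp_congr_left (forall_arrow_hasseQuiver_iff_isLowerSet (P := P) L))

theorem lowerCone_eq_polyCone : lowerCone P =
    polyCone (LinearMap.ker (∑ p, LinearMap.proj p : (P → ℝ) →ₗ[ℝ] ℝ))
      fun L : {L : Finset P // IsLowerSet (L : Set P)} =>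
        (∑ p ∈ L.1, LinearMap.proj p : (P → ℝ) →ₗ[ℝ] ℝ) := by
  ext v
  simp [lowerCone, polyCone]

theorem isFace_lowerCone_inter (𝓛 : Finset (Finset P)) (h𝓛 : ∀ L ∈ 𝓛, IsLowerSet (L : Set P)) :
    IsFace (lowerCone P) (lowerCone P ∩ {v | ∀ L ∈ 𝓛, ∑ p ∈ L, v p = 0}) := by
  set a : P → ℝ := ∑ L ∈ 𝓛, fun p => if p ∈ L then 1 else 0
  have ha : ∀ v, rInner a v = ∑ L ∈ 𝓛, ∑ p ∈ L, v p := fun v => by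
    simp only [rInner, a, Finset.sum_apply, Finset.sum_mul, ite_mul, one_mul, zero_mul]
    rw [Finset.sum_comm]
    simp [Finset.sum_ite_mem]
  refine ⟨a, fun v hv => (ha v).trans_le (sum_nonpos fun L hL => hv.2 L (h𝓛 L hL)), ?_⟩
  ext v
  simp only [Set.mem_inter_iff, Set.mem_ofPred_eq, ha]
  exact and_congr_right fun hv => (sum_eq_zero_iff_of_nonpos fun L hL => hv.2 L (h𝓛 L hL)).symm

end LowerCone

section TightSets

variable {P : Type} [PartialOrder P] {F : Set (P → ℝ)} {L M : Finset P} {p q : P}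

def IsTight (F : Set (P → ℝ)) (L : Finset P) : Prop :=
  IsLowerSet (L : Set P) ∧ ∀ v ∈ F, ∑ p ∈ L, v p = 0

theorem isTight_empty : IsTight F ∅ :=
  ⟨by simpa using isLowerSet_empty, fun _ _ => sum_empty⟩

variable [Fintype P]

theorem isTight_univ (hF : F ⊆ lowerCone P) : IsTight F univ :=
  ⟨by simpa using isLowerSet_univ, fun _ hv => (hF hv).1⟩

theorem mem_face_of_forall_isTight {a : P → ℝ} (ha : ∀ v ∈ lowerCone P, rInner a v ≤ 0)
    {w : P → ℝ} (hw : w ∈ lowerCone P)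
    (htight : ∀ L, IsTight (lowerCone P ∩ {v | rInner a v = 0}) L → ∑ p ∈ L, w p = 0) :
    w ∈ lowerCone P ∩ {v | rInner a v = 0} := by
  let a' : (P → ℝ) →ₗ[ℝ] ℝ := ∑ p, a p • LinearMap.proj p
  have ha' : ∀ v, a' v = rInner a v := fun v => by simp [a', rInner]
  refine ⟨hw, show rInner a w = 0 from ?_⟩
  rw [lowerCone_eq_polyCone] at ha hw htight
  rw [← ha']
  refine apply_eq_zero_of_forall_tight (fun v hv => (ha' v).symm ▸ ha v hv) hw fun L hL => ?_
  simpa using htight L.1 ⟨L.2, fun v hv => by simpa using hL v hv.1 ((ha' v).trans hv.2)⟩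

variable [DecidableEq P]

theorem IsTight.inter_and_union (hF : F ⊆ lowerCone P) (hL : IsTight F L) (hM : IsTight F M) :
    IsTight F (L ∩ M) ∧ IsTight F (L ∪ M) := by
  have hinter : IsLowerSet ((L ∩ M : Finset P) : Set P) := by
    rw [coe_inter]
    exact hL.1.inter hM.1
  have hunion : IsLowerSet ((L ∪ M : Finset P) : Set P) := by
    rw [coe_union]
    exact hL.1.union hM.1
  -- the sums over `L ∩ M` and `L ∪ M` are nonpositive and add up to `0`
  have hsum : ∀ v ∈ F, ∑ p ∈ L ∩ M, v p = 0 ∧ ∑ p ∈ L ∪ M, v p = 0 := fun v hv => by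
    have := sum_union_inter (s₁ := L) (s₂ := M) (f := v)
    have h₁ := (hF hv).2 _ hinter
    have h₂ := (hF hv).2 _ hunion
    rw [hL.2 v hv, hM.2 v hv] at this
    constructor <;> linarith
  exact ⟨⟨hinter, fun v hv => (hsum v hv).1⟩, ⟨hunion, fun v hv => (hsum v hv).2⟩⟩

noncomputable def tightHull (F : Set (P → ℝ)) (p : P) : Finset P :=
  ({L | IsTight F L ∧ p ∈ L} : Finset (Finset P)).inf id

noncomputable def tightAvoid (F : Set (P → ℝ)) (p : P) : Finset P :=
  ({L | IsTight F L ∧ p ∉ L} : Finset (Finset P)).sup id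

noncomputable def tightClass (F : Set (P → ℝ)) (p : P) : Finset P :=
  tightHull F p \ tightAvoid F p

theorem isTight_tightHull (hF : F ⊆ lowerCone P) (p : P) : IsTight F (tightHull F p) :=
  inf_induction (isTight_univ hF) (fun _ h₁ _ h₂ => (h₁.inter_and_union hF h₂).1)
    fun _ hL => (mem_filter.1 hL).2.1

theorem isTight_tightAvoid (hF : F ⊆ lowerCone P) (p : P) : IsTight F (tightAvoid F p) :=
  sup_induction isTight_empty (fun _ h₁ _ h₂ => (h₁.inter_and_union hF h₂).2)
    fun _ hL => (mem_filter.1 hL).2.1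

theorem mem_tightClass : q ∈ tightClass F p ↔ ∀ L, IsTight F L → (p ∈ L ↔ q ∈ L) := by
  rw [tightClass, Finset.mem_sdiff, tightHull, tightAvoid, Finset.mem_inf, Finset.mem_sup]
  simp only [mem_filter, mem_univ, true_and, id, not_exists, not_and]
  exact ⟨fun h L hL => ⟨fun hp => h.1 L ⟨hL, hp⟩, fun hq => by_contra fun hp => h.2 L ⟨hL, hp⟩ hq⟩,
    fun h => ⟨fun L hL => (h L hL.1).1 hL.2, fun L hL hq => hL.2 ((h L hL.1).2 hq)⟩⟩

theorem mem_tightClass_self (F : Set (P → ℝ)) (p : P) : p ∈ tightClass F p :=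
  mem_tightClass.2 fun _ _ => Iff.rfl

theorem tightClass_subset (hL : IsTight F L) (hp : p ∈ L) : tightClass F p ⊆ L :=
  fun _ hq => (mem_tightClass.1 hq L hL).1 hp

theorem tightClass_eq_of_mem (h : q ∈ tightClass F p) : tightClass F q = tightClass F p := by
  ext r
  simp only [mem_tightClass] at h ⊢
  exact forall₂_congr fun L hL => by rw [h L hL]

theorem sum_tightClass (hF : F ⊆ lowerCone P) {v : P → ℝ} (hv : v ∈ F) (p : P) :
    ∑ q ∈ tightClass F p, v q = 0 := by
  rw [tightClass, ← sdiff_inter_self_left, sum_sdiff_eq_sub inter_subset_left,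
    (isTight_tightHull hF p).2 v hv,
    ((isTight_tightHull hF p).inter_and_union hF (isTight_tightAvoid hF p)).1.2 v hv, sub_zero]

theorem isTight_union_of_comparable_closed (hF : F ⊆ lowerCone P) {A B X : Finset P}
    (hA : IsTight F A) (hB : IsTight F B) (hBA : B ⊆ A) (hXAB : X ⊆ A \ B)
    (hX : ∀ u ∈ A \ B, ∀ w ∈ A \ B, u ≤ w → (u ∈ X ↔ w ∈ X)) : IsTight F (B ∪ X) := by
  have hmem : ∀ u w, u ≤ w → w ∈ A \ B → u ∉ B → u ∈ A \ B := fun u w huw hw hu =>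
    mem_sdiff.2 ⟨hA.1 huw (mem_sdiff.1 hw).1, hu⟩
  have hlowX : IsLowerSet ((B ∪ X : Finset P) : Set P) :=
    isLowerSet_union_of_forall_mem hB.1 fun u w huw hw hu =>
      (hX u (hmem u w huw (hXAB hw) hu) w (hXAB hw) huw).2 hw
  have hlowY : IsLowerSet ((B ∪ ((A \ B) \ X) : Finset P) : Set P) :=
    isLowerSet_union_of_forall_mem hB.1 fun u w huw hw hu => by
      obtain ⟨hwAB, hwX⟩ := mem_sdiff.1 hw
      have hu' := hmem u w huw hwAB hu
      exact mem_sdiff.2 ⟨hu', fun huX => hwX ((hX u hu' w hwAB huw).1 huX)⟩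
  refine ⟨hlowX, fun v hv => ?_⟩
  -- the sums over `B ∪ X` and `B ∪ ((A \ B) \ X)` are nonpositive and add up to `∑ B + ∑ A = 0`
  have hX' : ∑ p ∈ B ∪ X, v p = ∑ p ∈ B, v p + ∑ p ∈ X, v p :=
    sum_union (disjoint_of_subset_right hXAB disjoint_sdiff)
  have hY' : ∑ p ∈ B ∪ ((A \ B) \ X), v p = ∑ p ∈ B, v p + ∑ p ∈ (A \ B) \ X, v p :=
    sum_union (disjoint_of_subset_right sdiff_subset disjoint_sdiff)
  have hAB : ∑ p ∈ A \ B, v p = ∑ p ∈ X, v p + ∑ p ∈ (A \ B) \ X, v p := by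
    rw [← sum_sdiff hXAB, add_comm]
  have hA' : ∑ p ∈ A, v p = ∑ p ∈ A \ B, v p + ∑ p ∈ B, v p := (sum_sdiff hBA).symm
  have h₁ := (hF hv).2 _ hlowX
  have h₂ := (hF hv).2 _ hlowY
  have h₃ := hA.2 v hv
  have h₄ := hB.2 v hv
  linarith

theorem connectedIn_tightClass (hF : F ⊆ lowerCone P) (p : P) : connectedIn (tightClass F p) := by
  intro x hx y hy
  set C := tightClass F p
  set adj : P → P → Prop := fun u w => covIn C u w ∨ covIn C w u
  set A := tightHull F p
  set B := A ∩ tightAvoid F p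
  have hC : C = A \ B := (sdiff_inter_self_left _ _).symm
  have hB : IsTight F B := ((isTight_tightHull hF p).inter_and_union hF (isTight_tightAvoid hF p)).1
  set X := C.filter (ReflTransGen adj x)
  have hX : ∀ u ∈ C, ∀ w ∈ C, u ≤ w → (u ∈ X ↔ w ∈ X) := fun u hu w hw huw => by
    have huw' : ReflTransGen adj u w :=
      ReflTransGen.mono (fun _ _ => Or.inl) _ _ (reflTransGen_covIn_of_le hu hw huw)
    have hwu' : ReflTransGen adj w u := ReflTransGen.mono (fun _ _ => Or.symm) _ _ huw'.swap
    simp only [X, mem_filter]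
    exact ⟨fun h => ⟨hw, h.2.trans huw'⟩, fun h => ⟨hu, h.2.trans hwu'⟩⟩
  rw [hC] at hX
  have hXC : X ⊆ A \ B := hC ▸ filter_subset _ _
  have htight := isTight_union_of_comparable_closed hF (isTight_tightHull hF p) hB
    inter_subset_left hXC hX
  have hyBX : y ∈ B ∪ X := by
    have hxBX : x ∈ B ∪ X := mem_union_right _ (mem_filter.2 ⟨hx, ReflTransGen.refl⟩)
    exact (mem_tightClass.1 hy _ htight).1 ((mem_tightClass.1 hx _ htight).2 hxBX)
  rcases mem_union.1 hyBX with hyB | hyX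
  · exact absurd hyB (mem_sdiff.1 (hC ▸ hy)).2
  · exact (mem_filter.1 hyX).2

noncomputable def classPartition (F : Set (P → ℝ)) : Finset (Finset P) :=
  univ.image (tightClass F)

theorem mem_classPartition {S : Finset P} : S ∈ classPartition F ↔ ∃ p, tightClass F p = S := by
  simp [classPartition]

theorem tightClass_subset_of_blockRelF {S T L : Finset P}
    (h : blockRelF (classPartition F) S T) (hL : IsTight F L) (hTL : T ⊆ L) : S ⊆ L := by
  obtain ⟨hS, -, p, hp, q, hq, hpq⟩ := h
  obtain ⟨s, rfl⟩ := mem_classPartition.1 hS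
  rw [← tightClass_eq_of_mem hp]
  exact tightClass_subset hL (hL.1 hpq (hTL hq))

theorem classPartition_mem_CCpartitions (hF : F ⊆ lowerCone P) :
    classPartition F ∈ CCpartitions P := by
  refine ⟨?_, ?_, fun p => ⟨_, mem_classPartition.2 ⟨p, rfl⟩, mem_tightClass_self F p⟩, ?_, ?_⟩
  · rintro S hS
    obtain ⟨p, rfl⟩ := mem_classPartition.1 hS
    exact ⟨p, mem_tightClass_self F p⟩
  · rintro S hS T hT hST
    obtain ⟨p, rfl⟩ := mem_classPartition.1 hS
    obtain ⟨q, rfl⟩ := mem_classPartition.1 hT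
    refine disjoint_left.2 fun r hrp hrq => hST ?_
    rw [← tightClass_eq_of_mem hrp, ← tightClass_eq_of_mem hrq]
  · rintro S hS
    obtain ⟨p, rfl⟩ := mem_classPartition.1 hS
    exact connectedIn_tightClass hF p
  · have hbelow : ∀ {S T}, TransGen (blockRelF (classPartition F)) S T →
        S ∈ classPartition F ∧ T ∈ classPartition F ∧ ∀ L, IsTight F L → T ⊆ L → S ⊆ L := by
      intro S T h
      induction h with
      | single h => exact ⟨h.1, h.2.1, fun L hL => tightClass_subset_of_blockRelF h hL⟩
      | tail _ h ih => exact ⟨ih.1, h.2.1, fun L hL hL' => ih.2.2 L hL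
          (tightClass_subset_of_blockRelF h hL hL')⟩
    intro S T hST hTS
    obtain ⟨hS, hT, hST⟩ := hbelow hST
    obtain ⟨p, rfl⟩ := mem_classPartition.1 hS
    obtain ⟨q, rfl⟩ := mem_classPartition.1 hT
    refine (tightClass_eq_of_mem (mem_tightClass.2 fun L hL => ⟨fun hp => ?_, fun hq => ?_⟩)).symm
    · exact (hbelow hTS).2.2 L hL (tightClass_subset hL hp) (mem_tightClass_self F q)
    · exact hST L hL (tightClass_subset hL hq) (mem_tightClass_self F p)

end TightSets

section BlockFace

variable {P : Type} [PartialOrder P] [Fintype P] [DecidableEq P] {π : Finset (Finset P)}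
  {S T : Finset P}

def blockFace (π : Finset (Finset P)) : Set (P → ℝ) :=
  lowerCone P ∩ {v | ∀ S ∈ π, ∑ p ∈ S, v p = 0}

noncomputable def downClosure (π : Finset (Finset P)) (S : Finset P) : Finset P :=
  {x | ∃ T ∈ π, x ∈ T ∧ ReflTransGen (blockRelF π) T S}

theorem subset_downClosure (hS : S ∈ π) : S ⊆ downClosure π S :=
  fun x hx => mem_filter.2 ⟨mem_univ x, S, hS, hx, ReflTransGen.refl⟩

theorem mem_downClosure_iff (hdisj : ∀ S ∈ π, ∀ T ∈ π, S ≠ T → Disjoint S T) (hT : T ∈ π)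
    {x : P} (hx : x ∈ T) : x ∈ downClosure π S ↔ ReflTransGen (blockRelF π) T S := by
  refine ⟨fun h => ?_, fun h => mem_filter.2 ⟨mem_univ x, T, hT, hx, h⟩⟩
  obtain ⟨T', hT', hxT', h⟩ := (mem_filter.1 h).2
  by_cases hTT' : T = T'
  · exact hTT' ▸ h
  · exact absurd hxT' (disjoint_left.1 (hdisj T hT T' hT' hTT') hx)

theorem isLowerSet_downClosure (hcover : ∀ p, ∃ T ∈ π, p ∈ T) :
    IsLowerSet (downClosure π S : Set P) := by
  intro y x hxy hy
  obtain ⟨T, hT, hyT, hTS⟩ := (mem_filter.1 hy).2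
  obtain ⟨T', hT', hxT'⟩ := hcover x
  exact mem_filter.2 ⟨mem_univ x, T', hT', hxT', .head ⟨hT', hT, x, hxT', y, hyT, hxy⟩ hTS⟩

theorem isLowerSet_downClosure_sdiff (hcover : ∀ p, ∃ T ∈ π, p ∈ T)
    (hcompat : ∀ S T, TransGen (blockRelF π) S T → TransGen (blockRelF π) T S → S = T)
    (hS : S ∈ π) : IsLowerSet ((downClosure π S \ S : Finset P) : Set P) := by
  intro y x hxy hy
  rw [mem_coe, Finset.mem_sdiff] at hy ⊢
  refine ⟨isLowerSet_downClosure hcover hxy hy.1, fun hxS => hy.2 ?_⟩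
  -- otherwise the block of `y` would lie both above and strictly below `S`
  obtain ⟨T, hT, hyT, hTS⟩ := (mem_filter.1 hy.1).2
  rcases reflTransGen_iff_eq_or_transGen.1 hTS with rfl | hTS
  · exact hyT
  · exact hcompat S T (.single ⟨hS, hT, x, hxS, y, hyT, hxy⟩) hTS ▸ hyT

theorem sum_downClosure (hdisj : ∀ S ∈ π, ∀ T ∈ π, S ≠ T → Disjoint S T)
    (hcover : ∀ p, ∃ T ∈ π, p ∈ T) {v : P → ℝ} (hv : ∀ T ∈ π, ∑ p ∈ T, v p = 0) :
    ∑ p ∈ downClosure π S, v p = 0 :=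
  sum_eq_zero_of_forall_subset hdisj hcover (fun _ hT _ hxT hx _ hyT =>
    (mem_downClosure_iff hdisj hT hyT).2 ((mem_downClosure_iff hdisj hT hxT).1 hx)) hv

variable (K : Type) [Field K] in
theorem Fpi_eq_blockFace (hπ : π ∈ CCpartitions P) : Fpi K P π = blockFace π := by
  obtain ⟨-, hdisj, hcover, -, hcompat⟩ := hπ
  ext v
  simp only [Fpi, blockFace, stabSpace_thinRep_hasseQuiver, Set.mem_inter_iff, Set.mem_ofPred_eq]
  refine ⟨fun ⟨hv, hS⟩ => ⟨hv, fun S h => (hS S h).1⟩,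
    fun ⟨hv, hS⟩ => ⟨hv, fun S h => ⟨hS S h, fun T hT => ?_⟩⟩⟩
  have hlow : IsLowerSet (((downClosure π S \ S) ∪ T : Finset P) : Set P) := by
    intro y x hxy hy
    rw [mem_coe, mem_union] at hy ⊢
    rcases hy with hy | hyT
    · exact Or.inl (isLowerSet_downClosure_sdiff hcover hcompat h hxy hy)
    · by_cases hxS : x ∈ S
      · exact Or.inr (hT.2 x hxS y hyT hxy)
      · obtain ⟨T', hT', hxT'⟩ := hcover x
        exact Or.inl (mem_sdiff.2 ⟨mem_filter.2 ⟨mem_univ x, T', hT', hxT',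
          .single ⟨hT', h, x, hxT', y, hT.1 hyT, hxy⟩⟩, hxS⟩)
  have hsum := hv.2 _ hlow
  rwa [sum_union (disjoint_of_subset_right hT.1 sdiff_disjoint),
    sum_sdiff_eq_sub (subset_downClosure h), sum_downClosure hdisj hcover hS, hS S h,
    sub_zero, zero_add] at hsum

theorem isFace_blockFace (hπ : π ∈ CCpartitions P) : IsFace (lowerCone P) (blockFace π) := by
  obtain ⟨-, hdisj, hcover, -, hcompat⟩ := hπ
  convert isFace_lowerCone_inter (π.image (downClosure π) ∪ π.image fun S => downClosure π S \ S)
    ?_ using 1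
  · ext v
    simp only [blockFace, Set.mem_inter_iff, Set.mem_ofPred_eq, mem_union, mem_image]
    refine and_congr_right fun _ => ⟨fun hv L hL => ?_, fun hv S hS => ?_⟩
    · rcases hL with ⟨S, hS, rfl⟩ | ⟨S, hS, rfl⟩
      · exact sum_downClosure hdisj hcover hv
      · rw [sum_sdiff_eq_sub (subset_downClosure hS), sum_downClosure hdisj hcover hv, hv S hS,
          sub_zero]
    · have := sum_sdiff_eq_sub (subset_downClosure hS) (f := v)
      rw [hv _ (Or.inl ⟨S, hS, rfl⟩), hv _ (Or.inr ⟨S, hS, rfl⟩)] at this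
      linarith
  · simp only [mem_union, mem_image]
    rintro L (⟨S, -, rfl⟩ | ⟨S, hS, rfl⟩)
    · exact isLowerSet_downClosure hcover
    · exact isLowerSet_downClosure_sdiff hcover hcompat hS

theorem single_sub_single_mem_blockFace (hdisj : ∀ S ∈ π, ∀ T ∈ π, S ≠ T → Disjoint S T)
    (hS : S ∈ π) {u w : P} (hu : u ∈ S) (hw : w ∈ S) (huw : u ≤ w) :
    (Pi.single w 1 - Pi.single u 1 : P → ℝ) ∈ blockFace π := by
  refine ⟨⟨by simp, fun L hL => ?_⟩, fun T hT => ?_⟩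
  · rw [sum_single_sub_single]
    by_cases hwL : w ∈ L
    · have huL : u ∈ L := hL huw hwL
      simp [hwL, huL]
    · simp only [hwL, if_false]
      split_ifs <;> norm_num
  · rw [sum_single_sub_single]
    by_cases hTS : T = S
    · simp [hTS, hu, hw]
    · have hST := disjoint_left.1 (hdisj S hS T hT (Ne.symm hTS))
      simp [hST hu, hST hw]

theorem mem_iff_mem_of_isTight_blockFace (hdisj : ∀ S ∈ π, ∀ T ∈ π, S ≠ T → Disjoint S T)
    (hS : S ∈ π) {u w : P} (hu : u ∈ S) (hw : w ∈ S) (huw : u ≤ w) {L : Finset P}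
    (hL : IsTight (blockFace π) L) : u ∈ L ↔ w ∈ L := by
  refine ⟨fun huL => by_contra fun hwL => ?_, fun hwL => hL.1 huw hwL⟩
  have := hL.2 _ (single_sub_single_mem_blockFace hdisj hS hu hw huw)
  rw [sum_single_sub_single, if_neg hwL, if_pos huL] at this
  norm_num at this

theorem isTight_downClosure (hdisj : ∀ S ∈ π, ∀ T ∈ π, S ≠ T → Disjoint S T)
    (hcover : ∀ p, ∃ T ∈ π, p ∈ T) : IsTight (blockFace π) (downClosure π S) :=
  ⟨isLowerSet_downClosure hcover, fun _ hv => sum_downClosure hdisj hcover hv.2⟩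

theorem tightClass_blockFace (hπ : π ∈ CCpartitions P) (hS : S ∈ π) {p : P} (hp : p ∈ S) :
    tightClass (blockFace π) p = S := by
  obtain ⟨-, hdisj, hcover, hconn, hcompat⟩ := hπ
  refine Subset.antisymm (fun q hq => ?_) fun q hq => mem_tightClass.2 fun L hL => ?_
  · obtain ⟨T, hT, hqT⟩ := hcover q
    have hdown := fun U => mem_tightClass.1 hq _ (isTight_downClosure (S := U) hdisj hcover)
    have hTS := (mem_downClosure_iff hdisj hT hqT).1 ((hdown S).1 (subset_downClosure hS hp))
    have hST := (mem_downClosure_iff hdisj hS hp).1 ((hdown T).2 (subset_downClosure hT hqT))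
    exact eq_of_reflTransGen_of_reflTransGen hcompat hTS hST ▸ hqT
  · have hchain := hconn S hS p hp q hq
    clear hq
    induction hchain with
    | refl => exact Iff.rfl
    | tail _ hstep ih =>
      refine ih.trans ?_
      rcases hstep with ⟨hb, hc, hbc, -⟩ | ⟨hc, hb, hcb, -⟩
      · exact mem_iff_mem_of_isTight_blockFace hdisj hS hb hc hbc.le hL
      · exact (mem_iff_mem_of_isTight_blockFace hdisj hS hc hb hcb.le hL).symm

theorem classPartition_blockFace (hπ : π ∈ CCpartitions P) :
    classPartition (blockFace π) = π := by
  ext S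
  rw [mem_classPartition]
  constructor
  · rintro ⟨p, rfl⟩
    obtain ⟨T, hT, hpT⟩ := hπ.2.2.1 p
    rwa [tightClass_blockFace hπ hT hpT]
  · intro hS
    obtain ⟨p, hp⟩ := hπ.1 S hS
    exact ⟨p, tightClass_blockFace hπ hS hp⟩

theorem blockFace_classPartition {F : Set (P → ℝ)} (hF : IsFace (lowerCone P) F) :
    blockFace (classPartition F) = F := by
  have hFC := hF.subset
  obtain ⟨a, ha, rfl⟩ := hF
  obtain ⟨-, hdisj, hcover, -, -⟩ := classPartition_mem_CCpartitions hFC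
  refine Set.Subset.antisymm (fun v hv => mem_face_of_forall_isTight ha hv.1 fun L hL => ?_)
    fun v hv => ⟨hFC hv, fun S hS => ?_⟩
  · refine sum_eq_zero_of_forall_subset hdisj hcover (fun T hT x hxT hxL => ?_) hv.2
    obtain ⟨p, rfl⟩ := mem_classPartition.1 hT
    rw [← tightClass_eq_of_mem hxT]
    exact tightClass_subset hL hxL
  · obtain ⟨p, rfl⟩ := mem_classPartition.1 hS
    exact sum_tightClass hFC hv p

theorem bijOn_blockFace :
    Set.BijOn blockFace (CCpartitions P) {F | IsFace (lowerCone P) F} :=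
  Set.InvOn.bijOn ⟨fun _ hπ => classPartition_blockFace hπ, fun _ hF => blockFace_classPartition hF⟩
    (fun _ hπ => isFace_blockFace hπ) fun _ hF => classPartition_mem_CCpartitions hF.subset

end BlockFace

theorem faces_of_stability_space_are_connected_compatible_partitions_general
    (K : Type) [Field K] (P : Type) [PartialOrder P] [Fintype P] [DecidableEq P] :
    Set.BijOn (fun π : Finset (Finset P) => Fpi K P π) (CCpartitions P)
      {F : Set (P → ℝ) | IsFace (stabSpace (thinRep K (hasseQuiver P))) F} := by
  rw [stabSpace_thinRep_hasseQuiver]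
  exact bijOn_blockFace.congr fun π hπ => (Fpi_eq_blockFace K hπ).symm

/-- For a finite connected poset `P`, the assignment `π ↦ F_π` is a
bijection from the set of connected compatible partitions of `P` onto the set of faces of
the cone `D(M_P)`. -/
theorem faces_of_stability_space_are_connected_compatible_partitions
    (K : Type) [Field K] (P : Type) [PartialOrder P] [Fintype P] [DecidableEq P]
    (hP : posetConnected P) :
    Set.BijOn (fun π : Finset (Finset P) => Fpi K P π) (CCpartitions P)
      {F : Set (P → ℝ) | IsFace (stabSpace (thinRep K (hasseQuiver P))) F} :=
  faces_of_stability_space_are_connected_compatible_partitions_general K P
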